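/- arXiv:1902.02608 — 5 statements merged into one kernel-verified Lean document; each statement's English description precedes it below -/
import Mathlib

section
/- The determinant of the eccentricity matrix of the star K_{1,n-1} on n vertices equals (−1)^{n−1}(n−1)2^{n−2}. -/
/-!
Scaling the row and the column of the centre by `1/2` turns the eccentricity matrix of the star
into `2 (J - I)`, so its determinant is `2^(n-2) det (J - I)`; and `J - I = -(I - 𝟙 𝟙ᵀ)` has
determinant `(-1)^n (1 - n)` by the matrix determinant lemma.
-/

open Matrix

namespace Matrix

variable {ι R : Type*} [Fintype ι] [DecidableEq ι] [CommRing R]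

theorem det_ones_sub_one :
    (of (fun _ _ => 1 : ι → ι → R) - 1).det = (-1) ^ Fintype.card ι * (1 - Fintype.card ι) := by
  have hrank_one : of (fun _ _ => 1 : ι → ι → R) - 1 =
      -(1 + replicateCol Unit (fun _ : ι => (-1 : R)) * replicateRow Unit (fun _ : ι => (1 : R))) := by
    ext i j
    simp [mul_apply, one_apply]
    ring
  rw [hrank_one, det_neg, det_one_add_replicateCol_mul_replicateRow]
  simp [dotProduct, sub_eq_add_neg]

variable (R) in
def starEccentricityMatrix (c : ι) : Matrix ι ι R :=
  of fun i j => if i = c ∧ j = c then 0 else if i = c ∨ j = c then 1 else if i = j then 0 else 2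

theorem starEccentricityMatrix_eq_diagonal_mul_mul_diagonal [Invertible (2 : R)] (c : ι) :
    starEccentricityMatrix R c =
      diagonal (fun i => if i = c then ⅟2 else 1) * ((2 : R) • (of (fun _ _ => 1) - 1)) *
        diagonal (fun i => if i = c then ⅟2 else 1) := by
  ext i j
  simp only [starEccentricityMatrix, diagonal_mul, mul_diagonal, of_apply, smul_apply, sub_apply,
    one_apply]
  split_ifs <;> simp_all

theorem det_starEccentricityMatrix [Invertible (2 : R)] (c : ι) (hcard : 2 ≤ Fintype.card ι) :
    (starEccentricityMatrix R c).det =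
      (-1) ^ (Fintype.card ι - 1) * ((Fintype.card ι : R) - 1) * 2 ^ (Fintype.card ι - 2) := by
  obtain ⟨k, hk⟩ : ∃ k, Fintype.card ι = k + 2 := ⟨_, (Nat.sub_add_cancel hcard).symm⟩
  rw [starEccentricityMatrix_eq_diagonal_mul_mul_diagonal, det_mul, det_mul, det_diagonal,
    det_smul, det_ones_sub_one, Finset.prod_ite_eq', if_pos (Finset.mem_univ c), hk]
  simp only [Nat.add_sub_cancel, pow_succ]
  push_cast
  linear_combination
    (2 ^ k * (-1) ^ k * (-(k : R) - 1) * (⅟2 * 2 + 1)) * invOf_mul_self (2 : R)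

end Matrix

/-- The determinant of the eccentricity matrix of the star `K_{1,n-1}` on `n` vertices,
which is `[[0, J_{1×(n-1)}],[J_{(n-1)×1}, 2(J_{n-1} - I_{n-1})]]`,
equals `(-1)^(n-1) (n-1) 2^(n-2)`. -/
theorem det_eccMatrix_star (n : ℕ) (hn : 2 ≤ n)
    (M : Matrix (Fin n) (Fin n) ℝ)
    (hM : M = Matrix.of fun (i j : Fin n) =>
      if (i : ℕ) = 0 ∧ (j : ℕ) = 0 then 0 else if (i : ℕ) = 0 ∨ (j : ℕ) = 0 then 1
      else if i = j then 0 else 2) :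
    M.det = (-1) ^ (n - 1) * ((n : ℝ) - 1) * 2 ^ (n - 2) := by
  let centre : Fin n := ⟨0, by omega⟩
  have hM_star : M = starEccentricityMatrix ℝ centre := by
    simp only [hM, starEccentricityMatrix, centre, Fin.ext_iff]
  rw [hM_star]
  simpa using det_starEccentricityMatrix centre (by simpa using hn)
end

section
/- The characteristic polynomial of the eccentricity matrix of the star K_{1,n-1} on n vertices equals (λ² − (2n−4)λ − (n−1))(λ+2)^{n−2} (up to sign); equivalently its spectrum is {(n−2) ± √(n²−3n+3) each with multiplicity 1, and −2 with multiplicity n−2}. -/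
/-!
Adding `2` on the diagonal turns the eccentricity matrix of the star into the matrix `[[2,1],[1,2]]`
blown up along the partition of the vertices into the centre and the leaves. Such a blow-up
factors as `W G Wᵀ` through the `n × 2` incidence matrix `W` of the partition, so by Sylvester's
identity its characteristic polynomial is `X ^ (n - 2)` times that of `Wᵀ W G = diag(1, n-1) G`,
a `2 × 2` matrix of trace `2n` and determinant `3(n-1)`. Shifting `X` by `2` gives the claim.
-/

open Polynomial Matrix

namespace Matrix

theorem submatrix_eq_one_submatrix_mul_mul_one_submatrix {k m n R : Type*} [Fintype k]
    [DecidableEq k] [Semiring R] (G : Matrix k k R) (p : m → k) (q : n → k) :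
    G.submatrix p q = (1 : Matrix k k R).submatrix p id * G * (1 : Matrix k k R).submatrix id q := by
  ext i j
  simp [mul_apply, one_apply]

theorem one_submatrix_mul_one_submatrix {k n R : Type*} [Fintype n] [DecidableEq k] [Semiring R]
    (p : n → k) :
    (1 : Matrix k k R).submatrix id p * (1 : Matrix k k R).submatrix p id =
      diagonal fun c => ((Finset.univ.filter fun i => p i = c).card : R) := by
  ext a b
  simp only [mul_apply, submatrix_apply, id, one_apply, diagonal_apply, mul_boole, ← ite_and,
    Finset.sum_boole]
  split_ifs with hab
  · subst hab
    simp [eq_comm]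
  · rw [Finset.filter_false_of_mem fun i _ h => hab (h.2.trans h.1), Finset.card_empty,
      Nat.cast_zero]

theorem charpoly_mul_sub_scalar {m n R : Type*} [Fintype m] [DecidableEq m] [Fintype n]
    [DecidableEq n] [CommRing R] (U : Matrix n m R) (V : Matrix m n R) (μ : R)
    (h : Fintype.card m ≤ Fintype.card n) :
    (U * V - scalar n μ).charpoly =
      (X + C μ) ^ (Fintype.card n - Fintype.card m) * (V * U).charpoly.comp (X + C μ) := by
  rw [charpoly_sub_scalar, charpoly_mul_comm_of_le _ _ h, mul_comp, X_pow_comp]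

theorem charpoly_submatrix_sub_scalar {k n R : Type*} [Fintype k] [DecidableEq k] [Fintype n]
    [DecidableEq n] [CommRing R] (G : Matrix k k R) (p : n → k) (μ : R)
    (h : Fintype.card k ≤ Fintype.card n) :
    (G.submatrix p p - scalar n μ).charpoly = (X + C μ) ^ (Fintype.card n - Fintype.card k) *
      (diagonal (fun c => ((Finset.univ.filter fun i => p i = c).card : R)) * G).charpoly.comp
        (X + C μ) := by
  rw [submatrix_eq_one_submatrix_mul_mul_one_submatrix, charpoly_mul_sub_scalar _ _ _ h,
    ← Matrix.mul_assoc, one_submatrix_mul_one_submatrix]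

end Matrix

section Star

variable (R : Type*) [CommRing R] (n : ℕ)

def starEccMatrix : Matrix (Fin n) (Fin n) R :=
  of fun i j => if (i : ℕ) = 0 ∧ (j : ℕ) = 0 then 0 else if (i : ℕ) = 0 ∨ (j : ℕ) = 0 then 1
    else if i = j then 0 else 2

/-- `0` for the centre, `1` for the leaves. -/
def starPart (i : Fin n) : Fin 2 := if (i : ℕ) = 0 then 0 else 1

theorem starEccMatrix_eq_submatrix_sub_scalar :
    starEccMatrix R n =
      (!![2, 1; 1, 2] : Matrix (Fin 2) (Fin 2) R).submatrix (starPart n) (starPart n) -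
        scalar (Fin n) 2 := by
  ext i j
  by_cases hi : (i : ℕ) = 0 <;> by_cases hj : (j : ℕ) = 0 <;>
    simp [starEccMatrix, starPart, hi, hj, Matrix.sub_apply, diagonal_apply, Fin.ext_iff] <;>
    split_ifs <;> simp_all

theorem card_starPart_fiber (hn : 1 ≤ n) :
    (fun c => ((Finset.univ.filter fun i => starPart n i = c).card : R)) = ![1, (n : R) - 1] := by
  obtain ⟨m, rfl⟩ : ∃ m, n = m + 1 := ⟨n - 1, by omega⟩
  have hp : starPart (m + 1) = fun i => if i = 0 then 0 else 1 := by
    funext i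
    simp only [starPart, Fin.ext_iff, Fin.val_zero]
  funext c
  fin_cases c
  · simp [hp, Finset.filter_eq']
  · simp [hp, Finset.filter_ne']

end Star

/-- The characteristic polynomial of the eccentricity matrix of the star `K_{1,n-1}`
on `n ≥ 3` vertices equals `(λ² - (2n-4)λ - (n-1)) (λ+2)^(n-2)`; equivalently,
its spectrum is `(n-2) ± √(n²-3n+3)` with multiplicity 1 and `-2` with multiplicity `n-2`. -/
theorem charpoly_eccMatrix_star (n : ℕ) (hn : 3 ≤ n)
    (M : Matrix (Fin n) (Fin n) ℝ)
    (hM : M = Matrix.of fun (i j : Fin n) =>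
      if (i : ℕ) = 0 ∧ (j : ℕ) = 0 then 0 else if (i : ℕ) = 0 ∨ (j : ℕ) = 0 then 1
      else if i = j then 0 else 2) :
    M.charpoly = (X ^ 2 - C (2 * (n : ℝ) - 4) * X - C ((n : ℝ) - 1)) * (X + C 2) ^ (n - 2) := by
  change M = starEccMatrix ℝ n at hM
  rw [hM, starEccMatrix_eq_submatrix_sub_scalar,
    charpoly_submatrix_sub_scalar _ _ _ (by simp only [Fintype.card_fin]; omega),
    card_starPart_fiber ℝ n (by omega), charpoly_fin_two]
  simp [trace_fin_two, det_fin_two, map_ofNat C]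
  ring
end

section
/- Let T be a tree on n ≥ 3 vertices that is not a star. Then the least eigenvalue of the eccentricity matrix of T is strictly less than −2. -/
open Matrix

/-- The eccentricity of a vertex: the largest distance from it to any vertex. -/
noncomputable def SimpleGraph.ecc {V : Type*} [Fintype V] (G : SimpleGraph V) (v : V) : ℕ :=
  Finset.univ.sup (G.dist v)

/-- The eccentricity matrix of a graph: `ε(G)_{uw} = d(u,w)` if
`d(u,w) = min{e(u), e(w)}`, and `0` otherwise. -/
noncomputable def SimpleGraph.eccMatrix {V : Type*} [Fintype V] (G : SimpleGraph V) :
    Matrix V V ℝ :=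
  Matrix.of fun u w =>
    if G.dist u w = min (G.ecc u) (G.ecc w) then (G.dist u w : ℝ) else 0

/-!
In a tree that is not a star the diameter `d` is at least `3`. The endpoints `u, w` of a
diametral path both have eccentricity `d`, so `ε(T)_{uw} = ε(T)_{wu} = d`, while the diagonal of
`ε(T)` vanishes. The test vector `e_u - e_w` therefore has Rayleigh quotient `-d ≤ -3`, and the
least eigenvalue of the symmetric matrix `ε(T)` is at most that.
-/

theorem Matrix.single_sub_single_dotProduct_mulVec {n R : Type*} [Fintype n] [DecidableEq n]
    [CommRing R] (A : Matrix n n R) (i j : n) :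
    (Pi.single i 1 - Pi.single j 1) ⬝ᵥ (A *ᵥ (Pi.single i 1 - Pi.single j 1)) =
      A i i - A i j - A j i + A j j := by
  simp only [mulVec_sub, mulVec_single_one, sub_dotProduct, dotProduct_sub, single_one_dotProduct,
    col_apply]
  ring

theorem Matrix.single_sub_single_dotProduct_self {n R : Type*} [DecidableEq n]
    [Fintype n] [CommRing R] {i j : n} (h : i ≠ j) :
    (Pi.single i 1 - Pi.single j 1 : n → R) ⬝ᵥ (Pi.single i 1 - Pi.single j 1) = 2 := by
  simp [dotProduct_sub, h, h.symm]
  ring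

open scoped MatrixOrder in
theorem Matrix.IsHermitian.exists_mem_spectrum_mul_dotProduct_le {n : Type*} [Fintype n]
    [DecidableEq n] [Nonempty n] {A : Matrix n n ℝ} (hA : A.IsHermitian) (x : n → ℝ) :
    ∃ μ ∈ spectrum ℝ A, μ * (x ⬝ᵥ x) ≤ x ⬝ᵥ (A *ᵥ x) := by
  obtain ⟨μ, hμ, hmin⟩ := Set.exists_min_image _ id A.finite_real_spectrum
    ⟨_, hA.eigenvalues_mem_spectrum_real (Classical.arbitrary n)⟩
  have hle : algebraMap ℝ (Matrix n n ℝ) μ ≤ A :=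
    algebraMap_le_of_le_spectrum hmin hA.isSelfAdjoint
  have := (Matrix.le_iff.mp hle).dotProduct_mulVec_nonneg x
  rw [Algebra.algebraMap_eq_smul_one, sub_mulVec, smul_mulVec, one_mulVec, dotProduct_sub,
    dotProduct_smul, star_trivial, smul_eq_mul, sub_nonneg] at this
  exact ⟨μ, hμ, this⟩

namespace SimpleGraph

variable {V : Type*} {G : SimpleGraph V}

theorem IsAcyclic.length_eq_dist_of_isPath (hG : G.IsAcyclic) {u v : V} {p : G.Walk u v}
    (hp : p.IsPath) : p.length = G.dist u v := by
  obtain ⟨q, hq, hlen⟩ := p.reachable.exists_path_of_dist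
  have hpq : p = q := congrArg Subtype.val ((hG.subsingleton_path u v).elim ⟨p, hp⟩ ⟨q, hq⟩)
  rw [hpq, hlen]

theorem IsAcyclic.dist_eq_three (hG : G.IsAcyclic) {a b c d : V} (hab : G.Adj a b)
    (hbc : G.Adj b c) (hcd : G.Adj c d) (hac : a ≠ c) (hbd : b ≠ d) (had : a ≠ d) :
    G.dist a d = 3 := by
  have hp : (Walk.cons hab (.cons hbc (.cons hcd .nil))).IsPath := by
    simp [hab.ne, hbc.ne, hcd.ne, hac, hbd, had]
  exact (hG.length_eq_dist_of_isPath hp).symm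

theorem Connected.exists_adj_adj_of_dist_le_two (hG : G.Connected) {u v : V} (hne : u ≠ v)
    (hadj : ¬ G.Adj u v) (h : G.dist u v ≤ 2) : ∃ w, G.Adj u w ∧ G.Adj w v := by
  have h2 : G.edist u v = 2 := by
    rw [← (hG u v).coe_dist_eq_edist]
    have := hG.one_lt_dist_of_ne_of_not_adj hne hadj
    norm_cast
    omega
  obtain ⟨w, hw⟩ := (edist_eq_two_iff.mp h2).2.2
  obtain ⟨huw, hvw⟩ := G.mem_commonNeighbors.mp hw
  exact ⟨w, huw, hvw.symm⟩

theorem IsTree.exists_isUniversal_of_forall_dist_le_two (hG : G.IsTree)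
    (h : ∀ u v, G.dist u v ≤ 2) : ∃ v, G.IsUniversal v := by
  have hc := hG.connected
  by_contra! hnot
  obtain ⟨a⟩ := hc.nonempty
  have exists_mid : ∀ x, ∃ y z, x ≠ z ∧ ¬ G.Adj x z ∧ G.Adj x y ∧ G.Adj y z := by
    intro x
    obtain ⟨z, hxz, hadj⟩ : ∃ z, x ≠ z ∧ ¬ G.Adj x z := by
      simpa only [IsUniversal, not_forall, exists_prop] using hnot x
    obtain ⟨y, hxy, hyz⟩ := hc.exists_adj_adj_of_dist_le_two hxz hadj (h x z)
    exact ⟨y, z, hxz, hadj, hxy, hyz⟩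
  -- `a - c - b` and `c - m - z` with `z` not adjacent to `c`: either `b - c - a - z` (if `m = a`)
  -- or `a - c - m - z` is a path of length `3`.
  obtain ⟨c, b, hab, -, hac, hcb⟩ := exists_mid a
  obtain ⟨m, z, hcz, hadj_cz, hcm, hmz⟩ := exists_mid c
  by_cases hma : m = a
  · subst hma
    have hbz : b ≠ z := by rintro rfl; exact hadj_cz hcb
    have := hG.isAcyclic.dist_eq_three hcb.symm hcm hmz hab.symm hcz hbz
    have := h b z
    omega
  · have haz : a ≠ z := by rintro rfl; exact hadj_cz hac.symm
    have := hG.isAcyclic.dist_eq_three hac hcm hmz (Ne.symm hma) hcz haz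
    have := h a z
    omega

theorem IsTree.three_le_diam [Finite V] (hG : G.IsTree) (h : ∀ v, ¬ G.IsUniversal v) :
    3 ≤ G.diam := by
  have := hG.connected.nonempty
  by_contra! hlt
  obtain ⟨v, hv⟩ := hG.exists_isUniversal_of_forall_dist_le_two fun u w =>
    (dist_le_diam (connected_iff_ediam_ne_top.mp hG.connected)).trans (by omega)
  exact h v hv

section Eccentricity

variable [Fintype V]

theorem dist_le_ecc (u v : V) : G.dist u v ≤ G.ecc u :=
  Finset.le_sup (Finset.mem_univ v)

theorem Connected.ecc_le_diam (hG : G.Connected) (u : V) : G.ecc u ≤ G.diam :=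
  have := hG.nonempty
  Finset.sup_le fun _ _ => dist_le_diam (connected_iff_ediam_ne_top.mp hG)

theorem eccMatrix_isHermitian : G.eccMatrix.IsHermitian := by
  ext u w
  simp only [conjTranspose_apply, eccMatrix, of_apply, star_trivial, dist_comm, min_comm]

@[simp]
theorem eccMatrix_apply_self (v : V) : G.eccMatrix v v = 0 := by
  simp [eccMatrix]

theorem Connected.eccMatrix_apply_of_dist_eq_diam (hG : G.Connected) {u w : V}
    (h : G.dist u w = G.diam) : G.eccMatrix u w = G.diam := by
  have hu : G.ecc u = G.diam := le_antisymm (hG.ecc_le_diam u) (h ▸ dist_le_ecc u w)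
  have hw : G.ecc w = G.diam :=
    le_antisymm (hG.ecc_le_diam w) (h ▸ dist_comm (G := G) ▸ dist_le_ecc w u)
  simp [eccMatrix, hu, hw, h]

end Eccentricity

end SimpleGraph

theorem eccMatrix_least_eigenvalue_lt_of_not_star_general {V : Type*} [Fintype V] [DecidableEq V]
    (G : SimpleGraph V) (hT : G.IsTree)
    (hstar : ¬ ∃ v : V, ∀ w : V, w ≠ v → G.Adj v w) :
    ∃ μ ∈ spectrum ℝ G.eccMatrix, μ < -2 := by
  have := hT.connected.nonempty
  obtain ⟨u, w, huw⟩ := G.exists_dist_eq_diam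
  have hdiam : 3 ≤ G.diam := hT.three_le_diam fun v hv => hstar ⟨v, fun w hw => hv hw.symm⟩
  have hne : u ≠ w := by rintro rfl; rw [SimpleGraph.dist_self] at huw; omega
  obtain ⟨μ, hμ, hle⟩ :=
    G.eccMatrix_isHermitian.exists_mem_spectrum_mul_dotProduct_le (Pi.single u 1 - Pi.single w 1)
  rw [single_sub_single_dotProduct_self hne, single_sub_single_dotProduct_mulVec,
    hT.connected.eccMatrix_apply_of_dist_eq_diam huw,
    hT.connected.eccMatrix_apply_of_dist_eq_diam (SimpleGraph.dist_comm.trans huw),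
    SimpleGraph.eccMatrix_apply_self, SimpleGraph.eccMatrix_apply_self] at hle
  have : (3 : ℝ) ≤ G.diam := by exact_mod_cast hdiam
  exact ⟨μ, hμ, by linarith⟩

/-- If `T` is a tree on `n ≥ 3` vertices which is not a star, then the least eigenvalue
of its eccentricity matrix is strictly less than `-2`. -/
theorem eccMatrix_least_eigenvalue_lt_of_not_star {V : Type*} [Fintype V] [DecidableEq V]
    (G : SimpleGraph V) (hT : G.IsTree) (hn : 3 ≤ Fintype.card V)
    (hstar : ¬ ∃ v : V, ∀ w : V, w ≠ v → G.Adj v w) :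
    ∃ μ ∈ spectrum ℝ G.eccMatrix, μ < -2 :=
  eccMatrix_least_eigenvalue_lt_of_not_star_general G hT hstar
end

section
/- Let T be a tree, let P(v₁, v_n) be a path of maximum length in T, and let v_j be any vertex of T. Then either d(v₁, v_j) = min{e(v₁), e(v_j)} or d(v_n, v_j) = min{e(v_n), e(v_j)}; i.e., every vertex attains an eccentricity-matrix nonzero entry with at least one endpoint of a longest path. -/
/-!
Let `P` be a longest path, from `s` to `t`, in a tree. Every vertex `x` has a closest point `m`
on `P`, and the geodesics from `x` to `s` and to `t` pass through `m`. For `m` on `P`, a vertex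
`u` cannot lie further from `m` than the farther endpoint of `P`, since otherwise the path from
the other endpoint to `u` would be longer than `P`. Hence `e(x) = max (d(x,s)) (d(x,t))`; if this
maximum is `d(x,s)`, then `d(s,x) = e(x) ≤ e(s)`, so `d(s,x) = min (e(s)) (e(x))`.
-/

open Matrix

namespace SimpleGraph

variable {V : Type*} {G : SimpleGraph V}

theorem Walk.IsPath.append {u v w : V} {p : G.Walk u v} {q : G.Walk v w}
    (hp : p.IsPath) (hq : q.IsPath) (h : ∀ x ∈ p.support, x ∈ q.support → x = v) :
    (p.append q).IsPath := by
  have hq' := hq.support_nodup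
  rw [← q.cons_tail_support, List.nodup_cons] at hq'
  rw [Walk.isPath_def, Walk.support_append]
  refine hp.support_nodup.append hq'.2 fun x hxp hxq => ?_
  obtain rfl := h x hxp (List.mem_of_mem_tail hxq)
  exact hq'.1 hxq

section Acyclic

variable (hG : G.IsAcyclic)
include hG

theorem IsAcyclic.dist_eq_length {u v : V} {p : G.Walk u v} (hp : p.IsPath) :
    G.dist u v = p.length := by
  obtain ⟨q, hq, hlen⟩ := p.reachable.exists_path_of_dist
  have hpq : p = q := congrArg Subtype.val ((hG.subsingleton_path u v).elim ⟨p, hp⟩ ⟨q, hq⟩)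
  rw [hpq, hlen]

theorem IsAcyclic.dist_add_dist_of_mem_support {u v c : V} {p : G.Walk u v} (hp : p.IsPath)
    (hc : c ∈ p.support) : G.dist u c + G.dist c v = G.dist u v := by
  classical
  rw [hG.dist_eq_length (hp.takeUntil hc), hG.dist_eq_length (hp.dropUntil hc),
    hG.dist_eq_length hp, ← Walk.length_append, Walk.take_spec]

theorem IsAcyclic.dist_add_dist_or_of_mem_support {s t a b : V} {p : G.Walk s t}
    (hp : p.IsPath) (ha : a ∈ p.support) (hb : b ∈ p.support) :
    G.dist s b + G.dist b a = G.dist s a ∨ G.dist a b + G.dist b t = G.dist a t := by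
  classical
  rw [← p.take_spec ha, Walk.mem_support_append_iff] at hb
  exact hb.imp (hG.dist_add_dist_of_mem_support (hp.takeUntil ha))
    (hG.dist_add_dist_of_mem_support (hp.dropUntil ha))

theorem IsAcyclic.dist_eq_dist_add_dist_of_inter_support {x m u v : V} {q : G.Walk x m}
    {p : G.Walk u v} (hq : q.IsPath) (hp : p.IsPath) (hm : m ∈ p.support)
    (hqp : ∀ z ∈ q.support, z ∈ p.support → z = m) :
    G.dist x v = G.dist x m + G.dist m v := by
  classical
  have hpath : (q.append (p.dropUntil m hm)).IsPath :=
    hq.append (hp.dropUntil hm) fun z hzq hzp =>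
      hqp z hzq (p.support_dropUntil_subset_support hm hzp)
  rw [hG.dist_eq_length hpath, Walk.length_append, hG.dist_eq_length hq,
    hG.dist_eq_length (hp.dropUntil hm)]

theorem IsAcyclic.exists_mem_support_dist_eq_add {s t x : V} (p : G.Walk s t) (hp : p.IsPath)
    (hx : G.Reachable x s) : ∃ m ∈ p.support,
      G.dist x s = G.dist x m + G.dist m s ∧ G.dist x t = G.dist x m + G.dist m t := by
  classical
  obtain ⟨m, hm, hmin⟩ := p.support.toFinset.exists_min_image (G.dist x)
    ⟨s, List.mem_toFinset.2 p.start_mem_support⟩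
  rw [List.mem_toFinset] at hm
  have hxm : G.Reachable x m := hx.trans (p.takeUntil m hm).reachable
  obtain ⟨q, hq, -⟩ := hxm.exists_path_of_dist
  have hqp : ∀ z ∈ q.support, z ∈ p.support → z = m := fun z hzq hzp => by
    have hsplit := hG.dist_add_dist_of_mem_support hq hzq
    have hle := hmin z (List.mem_toFinset.2 hzp)
    have hzm : G.dist z m = 0 := by omega
    exact ((q.dropUntil z hzq).reachable.dist_eq_zero_iff).1 hzm
  refine ⟨m, hm, ?_, hG.dist_eq_dist_add_dist_of_inter_support hq hp hm hqp⟩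
  refine hG.dist_eq_dist_add_dist_of_inter_support hq hp.reverse ?_ fun z hzq hzp => ?_
  · rwa [Walk.support_reverse, List.mem_reverse]
  · exact hqp z hzq (by rwa [Walk.support_reverse, List.mem_reverse] at hzp)

end Acyclic

section Diametral

variable (hG : G.IsTree) {s t : V} {p : G.Walk s t} (hp : p.IsPath)
  (hdiam : ∀ a b, G.dist a b ≤ G.dist s t)
include hG hp hdiam

theorem IsTree.dist_le_max_of_mem_support {m : V} (hm : m ∈ p.support) (u : V) :
    G.dist m u ≤ max (G.dist m s) (G.dist m t) := by
  obtain ⟨m', hm', hus, hut⟩ :=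
    hG.isAcyclic.exists_mem_support_dist_eq_add p hp (hG.connected u s)
  have hst := hG.isAcyclic.dist_add_dist_of_mem_support hp hm'
  have hm's : G.dist s m' = G.dist m' s := dist_comm
  have hm'u : G.dist u m' = G.dist m' u := dist_comm
  -- `u` hangs off `p` at `m'`, no farther from it than either end of the longest path `p`
  have hu_s : G.dist m' u ≤ G.dist m' s := by have := hdiam u t; omega
  have hu_t : G.dist m' u ≤ G.dist m' t := by have := hdiam u s; omega
  have htri : G.dist m u ≤ G.dist m m' + G.dist m' u := hG.connected.dist_triangle
  rcases hG.isAcyclic.dist_add_dist_or_of_mem_support hp hm hm' with hbetween | hbetween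
  · have : G.dist m' m = G.dist m m' := dist_comm
    have : G.dist s m = G.dist m s := dist_comm
    omega
  · omega

theorem IsTree.dist_le_max_of_diametral (x u : V) :
    G.dist x u ≤ max (G.dist x s) (G.dist x t) := by
  obtain ⟨m, hm, hxs, hxt⟩ :=
    hG.isAcyclic.exists_mem_support_dist_eq_add p hp (hG.connected x s)
  calc G.dist x u ≤ G.dist x m + G.dist m u := hG.connected.dist_triangle
    _ ≤ G.dist x m + max (G.dist m s) (G.dist m t) :=
      Nat.add_le_add_left (hG.dist_le_max_of_mem_support hp hdiam hm u) _
    _ = max (G.dist x s) (G.dist x t) := by rw [hxs, hxt, Nat.add_max_add_left]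

theorem IsTree.ecc_eq_max_of_diametral [Fintype V] (x : V) :
    G.ecc x = max (G.dist x s) (G.dist x t) :=
  le_antisymm (Finset.sup_le fun u _ => hG.dist_le_max_of_diametral hp hdiam x u)
    (max_le (Finset.le_sup (Finset.mem_univ s)) (Finset.le_sup (Finset.mem_univ t)))

end Diametral

theorem dist_eq_min_ecc_of_ecc_eq_dist [Fintype V] {x y : V} (h : G.ecc x = G.dist x y) :
    G.dist y x = min (G.ecc y) (G.ecc x) := by
  have hxy : G.ecc x ≤ G.ecc y := calc
    G.ecc x = G.dist y x := h.trans dist_comm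
    _ ≤ G.ecc y := Finset.le_sup (Finset.mem_univ x)
  rw [min_eq_right hxy, h, dist_comm]

end SimpleGraph

/-- In a tree, if `P(v₁, vₙ)` is a longest path, then every vertex `v_j` satisfies
`d(v₁,v_j) = min{e(v₁),e(v_j)}` or `d(vₙ,v_j) = min{e(vₙ),e(v_j)}`; i.e., every vertex
attains a nonzero eccentricity-matrix entry with an endpoint of a longest path. -/
theorem longest_path_endpoint_attains {V : Type*} [Fintype V]
    (G : SimpleGraph V) (hT : G.IsTree) (v₁ vₙ : V)
    (p : G.Walk v₁ vₙ) (hp : p.IsPath)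
    (hmax : ∀ (a b : V) (q : G.Walk a b), q.IsPath → q.length ≤ p.length)
    (vj : V) :
    G.dist v₁ vj = min (G.ecc v₁) (G.ecc vj) ∨
      G.dist vₙ vj = min (G.ecc vₙ) (G.ecc vj) := by
  have hdiam : ∀ a b, G.dist a b ≤ G.dist v₁ vₙ := fun a b => by
    obtain ⟨q, hq, hqlen⟩ := hT.connected.exists_path_of_dist a b
    rw [← hqlen, hT.isAcyclic.dist_eq_length hp]
    exact hmax a b q hq
  have hecc := hT.ecc_eq_max_of_diametral hp hdiam vj
  rcases le_total (G.dist vj vₙ) (G.dist vj v₁) with h | h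
  · exact Or.inl (SimpleGraph.dist_eq_min_ecc_of_ecc_eq_dist (by rw [hecc, max_eq_left h]))
  · exact Or.inr (SimpleGraph.dist_eq_min_ecc_of_ecc_eq_dist (by rw [hecc, max_eq_right h]))
end

section
/- Let G be an r-regular graph with diameter 2 on n vertices whose adjacency matrix has eigenvalues r, λ₂, …, λ_n. Then the eccentricity matrix of G ∨ K₁ is [[2A(Ḡ), J_{n×1}],[J_{1×n}, 0]], and its spectrum is {(n−r−1) ± √((n−r−1)² + n) each with multiplicity 1} ∪ {−2(λ_i + 1) : i = 2, …, n}. -/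
open Matrix

open Polynomial

/-- The join `G ∨ K₁`: a new vertex adjacent to every vertex of `G`. -/
def joinK1 {V : Type*} (G : SimpleGraph V) : SimpleGraph (V ⊕ Unit) :=
  SimpleGraph.fromRel fun x y =>
    (∃ u v, x = Sum.inl u ∧ y = Sum.inl v ∧ G.Adj u v) ∨
    (∃ u, x = Sum.inl u ∧ y = Sum.inr ())

/-!
Every vertex of a regular graph of diameter `2` has a non-neighbour, so in `G ∨ K₁` the apex
has eccentricity `1` and every other vertex eccentricity `2`; this gives the block form of `ε`.

For the spectrum write `A(Ḡ) = J - I - A`. A Schur complement on the apex gives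
`det (x I - ε) = x · det (B - (2 + x⁻¹) J)` with `B = (x + 2) I + 2A`. Since the all-ones vector
is an eigenvector of `B` for `x + 2 + 2r`, the matrix determinant lemma turns this into
`(x + 2 + 2r) · χ_ε(x) = (x² - 2(n - r - 1)x - n) · det B`, and `det B = ∏ (x + 2 + 2λ)` over
the adjacency spectrum, whose factor at `λ = r` cancels. The identity holds for all but finitely
many `x`, hence between polynomials.
-/

namespace Matrix

variable {m K : Type*} [Fintype m] [DecidableEq m]

theorem eval_charpoly_eq_det [CommRing K] (M : Matrix m m K) (x : K) :
    M.charpoly.eval x = det (x • 1 - M) := by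
  rw [eval_charpoly, scalar_apply, smul_one_eq_diagonal]

theorem det_smul_one_sub_fromBlocks_ones [Field K] (P : Matrix m m K) {x : K} (hx : x ≠ 0) :
    det (x • 1 - fromBlocks P (of fun _ _ => 1) (of fun _ _ => 1) (0 : Matrix Unit Unit K)) =
      x * det (x • 1 - P - x⁻¹ • of fun _ _ => 1) := by
  have hD : IsUnit (x • 1 : Matrix Unit Unit K).det := by simpa using hx
  let := invertibleOfIsUnitDet _ hD
  have hinv : ⅟(x • 1 : Matrix Unit Unit K) = x⁻¹ • 1 :=
    invOf_eq_right_inv (by ext; simp [hx])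
  have hblock :
      x • 1 - fromBlocks P (of fun _ _ => 1) (of fun _ _ => 1) (0 : Matrix Unit Unit K) =
        fromBlocks (x • 1 - P) (-of fun _ _ => 1) (-of fun _ _ => 1) (x • 1) := by
    rw [← fromBlocks_one, fromBlocks_smul]
    ext (i | i) (j | j) <;> simp
  rw [hblock, det_fromBlocks₂₂, hinv]
  congr 2
  · simp
  · ext i j
    simp [mul_apply]

theorem det_sub_smul_ones_of_mulVec_ones [CommRing K] (B : Matrix m m K) (hB : IsUnit B.det) {k : K}
    (hk : B *ᵥ (fun _ => 1) = k • fun _ => 1) (c : K) :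
    k * det (B - c • of fun _ _ => 1) = det B * (k - c * Fintype.card m) := by
  have hinv : k • (B⁻¹ *ᵥ fun _ => 1) = fun _ => 1 := by
    rw [← mulVec_smul, ← hk, mulVec_mulVec, nonsing_inv_mul _ hB, one_mulVec]
  have hrank1 : B - c • of (fun _ _ => 1) =
      B + replicateCol Unit (fun _ => -c) * replicateRow Unit (fun _ => (1 : K)) := by
    ext i j
    simp [sub_eq_add_neg, mul_apply]
  have hcard : k * ((fun _ => 1) ⬝ᵥ B⁻¹ *ᵥ fun _ => (1 : K)) = Fintype.card m := by
    rw [← smul_eq_mul, ← dotProduct_smul, hinv]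
    simp [dotProduct]
  have hcol : (fun _ => -c : m → K) = (-c) • fun _ => 1 := by ext; simp
  rw [hrank1, det_add_replicateCol_mul_replicateRow hB, det_unique (n := Unit), Matrix.add_apply,
    one_apply_eq, Matrix.mul_assoc, ← replicateCol_mulVec, replicateRow_mul_replicateCol_apply,
    hcol, mulVec_smul, dotProduct_smul, smul_eq_mul, ← hcard]
  ring

theorem det_smul_one_add_smul_of_charpoly_eq_prod [Field K] (M : Matrix m m K) {R : Multiset K}
    (hM : M.charpoly = (R.map fun t => X - C t).prod) (a : K) {b : K}
    (hb : b ≠ 0) : det (a • 1 + b • M) = (R.map fun t => a + b * t).prod := by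
  have hcard : R.card = Fintype.card m := by
    rw [← M.charpoly_natDegree_eq_dim, hM, Polynomial.natDegree_multiset_prod_X_sub_C_eq_card]
  have hfactor : a • 1 + b • M = (-b) • ((-a / b) • 1 - M) := by
    rw [smul_sub, smul_smul]; field_simp; module
  rw [hfactor, det_smul, ← eval_charpoly_eq_det, hM, Polynomial.eval_multiset_prod, ← hcard,
    ← Multiset.prod_replicate, ← Multiset.map_const', Multiset.map_map,
    ← Multiset.prod_map_mul]
  congr 1
  refine Multiset.map_congr rfl fun t _ => ?_
  simp
  field_simp
  ring

end Matrix

namespace SimpleGraph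

variable {V : Type*} {G : SimpleGraph V}

theorem compl_adj_of_two_le_dist {u v : V} (h : 2 ≤ G.dist u v) : Gᶜ.Adj u v := by
  refine ⟨fun huv => ?_, fun hadj => ?_⟩
  · subst huv; simp at h
  · rw [dist_eq_one_iff_adj.mpr hadj] at h; omega

theorem IsRegularOfDegree.exists_compl_adj [Fintype V] [DecidableEq V] [DecidableRel G.Adj]
    {r : ℕ} (hreg : G.IsRegularOfDegree r) {a b : V} (hab : Gᶜ.Adj a b) (u : V) :
    ∃ w, Gᶜ.Adj u w := by
  rw [← degree_pos_iff_exists_adj, hreg.compl u, ← hreg.compl a]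
  exact (Gᶜ.degree_pos_iff_exists_adj a).mpr ⟨b, hab⟩

theorem adjMatrix_compl_eq_ones_sub_one_sub [DecidableEq V] [DecidableRel G.Adj] :
    Gᶜ.adjMatrix ℝ = of (fun _ _ => 1) - 1 - G.adjMatrix ℝ := by
  rw [sub_sub, eq_sub_iff_add_eq, ← G.compl_adjMatrix_eq_adjMatrix_compl ℝ, add_comm]
  exact G.one_add_adjMatrix_add_compl_adjMatrix_eq_of_one (α := ℝ)

end SimpleGraph

section JoinK1

open SimpleGraph

variable {V : Type*} {G : SimpleGraph V}

@[simp]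
theorem joinK1_adj_inl_inl {u v : V} : (joinK1 G).Adj (.inl u) (.inl v) ↔ G.Adj u v := by
  simp only [joinK1, fromRel_adj, ne_eq, Sum.inl.injEq]
  exact ⟨fun ⟨_, h⟩ => by simpa [G.adj_comm u v] using h, fun h => ⟨h.ne, by simp [h]⟩⟩

theorem joinK1_adj_inl_inr (u : V) : (joinK1 G).Adj (.inl u) (.inr ()) := by
  simp [joinK1]

@[simp]
theorem joinK1_dist_inl_inr (u : V) : (joinK1 G).dist (.inl u) (.inr ()) = 1 :=
  dist_eq_one_iff_adj.mpr (joinK1_adj_inl_inr u)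

@[simp]
theorem joinK1_dist_inr_inl (u : V) : (joinK1 G).dist (.inr ()) (.inl u) = 1 :=
  dist_eq_one_iff_adj.mpr (joinK1_adj_inl_inr u).symm

theorem joinK1_dist_inl_inl_of_adj {u v : V} (h : G.Adj u v) :
    (joinK1 G).dist (.inl u) (.inl v) = 1 :=
  dist_eq_one_iff_adj.mpr (joinK1_adj_inl_inl.mpr h)

theorem joinK1_dist_le_two (x y : V ⊕ Unit) : (joinK1 G).dist x y ≤ 2 := by
  rcases x with u | ⟨⟨⟩⟩ <;> rcases y with v | ⟨⟨⟩⟩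
  · exact dist_le (.cons (joinK1_adj_inl_inr u) (.cons (joinK1_adj_inl_inr v).symm .nil))
  all_goals simp

theorem joinK1_dist_inl_inl_of_compl_adj {u v : V} (h : Gᶜ.Adj u v) :
    (joinK1 G).dist (.inl u) (.inl v) = 2 := by
  have hreach : (joinK1 G).Reachable (.inl u) (.inl v) :=
    ⟨.cons (joinK1_adj_inl_inr u) (.cons (joinK1_adj_inl_inr v).symm .nil)⟩
  have h0 := hreach.pos_dist_of_ne (by simpa using h.ne)
  have h1 : (joinK1 G).dist (.inl u) (.inl v) ≠ 1 := by
    rw [Ne, dist_eq_one_iff_adj, joinK1_adj_inl_inl]; exact h.2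
  have := joinK1_dist_le_two (G := G) (.inl u) (.inl v)
  omega

variable [Fintype V]

theorem joinK1_ecc_inr [Nonempty V] : (joinK1 G).ecc (.inr ()) = 1 := by
  refine le_antisymm (Finset.sup_le ?_) ?_
  · rintro (v | ⟨⟨⟩⟩) - <;> simp
  · obtain ⟨v⟩ := ‹Nonempty V›
    exact (joinK1_dist_inr_inl v).symm.le.trans (Finset.le_sup (Finset.mem_univ (Sum.inl v)))

theorem joinK1_ecc_inl {u w : V} (huw : Gᶜ.Adj u w) : (joinK1 G).ecc (.inl u) = 2 :=
  le_antisymm (Finset.sup_le fun y _ => joinK1_dist_le_two _ y)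
    ((joinK1_dist_inl_inl_of_compl_adj huw).symm.le.trans (Finset.le_sup (Finset.mem_univ _)))

theorem eccMatrix_joinK1 [DecidableEq V] [DecidableRel G.Adj] (h : ∀ u, ∃ w, Gᶜ.Adj u w) :
    (joinK1 G).eccMatrix =
      fromBlocks (2 • Gᶜ.adjMatrix ℝ) (of fun _ _ => 1) (of fun _ _ => 1) 0 := by
  have ecc_inl (u : V) : (joinK1 G).ecc (.inl u) = 2 := joinK1_ecc_inl (h u).choose_spec
  ext (u | ⟨⟨⟩⟩) (v | ⟨⟨⟩⟩)
  · simp only [eccMatrix, of_apply, fromBlocks_apply₁₁, Matrix.smul_apply, adjMatrix_apply,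
      ecc_inl]
    by_cases hadj : Gᶜ.Adj u v
    · simp [joinK1_dist_inl_inl_of_compl_adj hadj, hadj]
    · obtain rfl | hne := eq_or_ne u v
      · simp
      · have : G.Adj u v := by simpa [hne] using hadj
        simp [joinK1_dist_inl_inl_of_adj this, hadj]
  · have : Nonempty V := ⟨u⟩
    simp [eccMatrix, ecc_inl, joinK1_ecc_inr]
  · have : Nonempty V := ⟨v⟩
    simp [eccMatrix, ecc_inl, joinK1_ecc_inr]
  · simp [eccMatrix]

end JoinK1

namespace SimpleGraph

variable {V : Type*} [Fintype V] [DecidableEq V] {G : SimpleGraph V} [DecidableRel G.Adj]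
  {r : ℕ}

theorem IsRegularOfDegree.det_smul_one_sub_fromBlocks_compl_adjMatrix
    (hreg : G.IsRegularOfDegree r) {x : ℝ} (hx : x ≠ 0)
    (hB : IsUnit ((x + 2) • 1 + (2 : ℝ) • G.adjMatrix ℝ).det) :
    (x + 2 + 2 * r) *
        det (x • 1 - fromBlocks (2 • Gᶜ.adjMatrix ℝ) (of fun _ _ => 1) (of fun _ _ => 1)
          (0 : Matrix Unit Unit ℝ)) =
      (x ^ 2 - 2 * (Fintype.card V - r - 1) * x - Fintype.card V) *
        det ((x + 2) • 1 + (2 : ℝ) • G.adjMatrix ℝ) := by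
  have hones : ((x + 2) • 1 + (2 : ℝ) • G.adjMatrix ℝ) *ᵥ (fun _ => 1) =
      (x + 2 + 2 * r) • fun _ => 1 := by
    ext v
    simp [add_mulVec, smul_mulVec, hreg v]
  have hschur : x • 1 - 2 • Gᶜ.adjMatrix ℝ - x⁻¹ • of (fun _ _ => 1) =
      ((x + 2) • 1 + (2 : ℝ) • G.adjMatrix ℝ) - (2 + x⁻¹) • of fun _ _ => 1 := by
    rw [adjMatrix_compl_eq_ones_sub_one_sub]
    module
  rw [det_smul_one_sub_fromBlocks_ones _ hx, hschur, mul_left_comm,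
    det_sub_smul_ones_of_mulVec_ones _ hB hones]
  field_simp
  ring

theorem IsRegularOfDegree.charpoly_fromBlocks_compl_adjMatrix
    (hreg : G.IsRegularOfDegree r) {L : Multiset ℝ}
    (hA : (G.adjMatrix ℝ).charpoly = (((r : ℝ) ::ₘ L).map fun t => X - C t).prod) :
    (fromBlocks (2 • Gᶜ.adjMatrix ℝ) (of fun _ _ => 1) (of fun _ _ => 1)
        (0 : Matrix Unit Unit ℝ)).charpoly =
      (((((Fintype.card V : ℝ) - r - 1) +
            √(((Fintype.card V : ℝ) - r - 1) ^ 2 + Fintype.card V)) ::ₘ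
        (((Fintype.card V : ℝ) - r - 1) -
            √(((Fintype.card V : ℝ) - r - 1) ^ 2 + Fintype.card V)) ::ₘ
          L.map (fun t => -2 * (t + 1))).map fun t => X - C t).prod := by
  let S : Finset ℝ := insert 0 (((r : ℝ) ::ₘ L).map fun t => -2 - 2 * t).toFinset
  refine eq_of_infinite_eval_eq _ _ (S.finite_toSet.infinite_compl.mono fun x hxS => ?_)
  simp only [S, Finset.coe_insert, Set.mem_compl_iff, Set.mem_insert_iff, Finset.mem_coe,
    Multiset.mem_toFinset, Multiset.mem_map, not_or, not_exists, not_and] at hxS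
  obtain ⟨hx, hxS⟩ := hxS
  have hfactor : ∀ t ∈ (r : ℝ) ::ₘ L, x + 2 + 2 * t ≠ 0 :=
    fun t ht h => hxS t ht (by linarith)
  have hdetB := (G.adjMatrix ℝ).det_smul_one_add_smul_of_charpoly_eq_prod hA (x + 2) two_ne_zero
  have hB : IsUnit ((x + 2) • 1 + (2 : ℝ) • G.adjMatrix ℝ).det := by
    rw [hdetB, isUnit_iff_ne_zero]
    exact Multiset.prod_ne_zero (by simpa [eq_comm] using hfactor)
  have key := hreg.det_smul_one_sub_fromBlocks_compl_adjMatrix hx hB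
  rw [hdetB, Multiset.map_cons, Multiset.prod_cons, mul_left_comm] at key
  have hsq := Real.sq_sqrt
    (by positivity : (0 : ℝ) ≤ ((Fintype.card V : ℝ) - r - 1) ^ 2 + Fintype.card V)
  have hL : L.map (fun t => x - -2 * (t + 1)) = L.map fun t => x + 2 + 2 * t :=
    Multiset.map_congr rfl fun t _ => by ring
  rw [Set.mem_ofPred_eq, eval_charpoly_eq_det, eval_multiset_prod,
    mul_left_cancel₀ (hfactor r (Multiset.mem_cons_self _ _)) key]
  simp only [Multiset.map_cons, Multiset.prod_cons, Multiset.map_map, Function.comp_def, eval_sub,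
    eval_X, eval_C, hL]
  linear_combination (L.map fun t => x + 2 + 2 * t).prod * hsq

end SimpleGraph

theorem eccMatrix_join_K1_general {V : Type*} [Fintype V] [DecidableEq V]
    (G : SimpleGraph V) [DecidableRel G.Adj] (r n : ℕ) (hn : n = Fintype.card V)
    (hreg : G.IsRegularOfDegree r)
    (hdiam : (∀ u v : V, G.dist u v ≤ 2) ∧ ∃ u v : V, G.dist u v = 2)
    (lam : Fin (n - 1) → ℝ)
    (hspec : (G.adjMatrix ℝ).charpoly.roots = (r : ℝ) ::ₘ Multiset.map lam Finset.univ.val) :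
    (joinK1 G).eccMatrix =
        Matrix.fromBlocks (2 • Gᶜ.adjMatrix ℝ) (Matrix.of fun _ _ => 1)
          (Matrix.of fun _ _ => 1) 0 ∧
      (joinK1 G).eccMatrix.charpoly.roots =
        (((n : ℝ) - r - 1) + Real.sqrt (((n : ℝ) - r - 1) ^ 2 + n)) ::ₘ
          (((n : ℝ) - r - 1) - Real.sqrt (((n : ℝ) - r - 1) ^ 2 + n)) ::ₘ
            Multiset.map (fun i => -2 * (lam i + 1)) Finset.univ.val := by
  obtain ⟨a, b, hab⟩ := hdiam.2
  have hblock :=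
    eccMatrix_joinK1 (hreg.exists_compl_adj (SimpleGraph.compl_adj_of_two_le_dist hab.ge))
  refine ⟨hblock, ?_⟩
  subst hn
  have hcard : ((r : ℝ) ::ₘ Multiset.map lam Finset.univ.val).card = Fintype.card V := by
    have := Fintype.card_pos_iff.mpr ⟨a⟩
    simp only [Multiset.card_cons, Multiset.card_map, Finset.card_val, Finset.card_univ,
      Fintype.card_fin]
    omega
  have hA : (G.adjMatrix ℝ).charpoly =
      (((r : ℝ) ::ₘ Multiset.map lam Finset.univ.val).map fun t => X - C t).prod := by
    rw [← hspec]
    refine (prod_multiset_X_sub_C_of_monic_of_roots_card_eq (charpoly_monic _) ?_).symm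
    rw [hspec, hcard, charpoly_natDegree_eq_dim]
  rw [hblock, hreg.charpoly_fromBlocks_compl_adjMatrix hA, roots_multiset_prod_X_sub_C,
    Multiset.map_map]
  rfl

/-- For an `r`-regular graph `G` with diameter `2` on `n` vertices with adjacency
eigenvalues `r, λ₂, …, λₙ`, the eccentricity matrix of `G ∨ K₁` is
`[[2A(Ḡ), J],[J, 0]]`, and its spectrum is `(n-r-1) ± √((n-r-1)² + n)` together with
`-2(λᵢ + 1)` for `i = 2, …, n`. -/
theorem eccMatrix_join_K1 {V : Type*} [Fintype V] [DecidableEq V]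
    (G : SimpleGraph V) [DecidableRel G.Adj] (r n : ℕ) (hn : n = Fintype.card V)
    (hreg : G.IsRegularOfDegree r) (hconn : G.Connected)
    (hdiam : (∀ u v : V, G.dist u v ≤ 2) ∧ ∃ u v : V, G.dist u v = 2)
    (lam : Fin (n - 1) → ℝ)
    (hspec : (G.adjMatrix ℝ).charpoly.roots = (r : ℝ) ::ₘ Multiset.map lam Finset.univ.val) :
    (joinK1 G).eccMatrix =
        Matrix.fromBlocks (2 • Gᶜ.adjMatrix ℝ) (Matrix.of fun _ _ => 1)
          (Matrix.of fun _ _ => 1) 0 ∧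
      (joinK1 G).eccMatrix.charpoly.roots =
        (((n : ℝ) - r - 1) + Real.sqrt (((n : ℝ) - r - 1) ^ 2 + n)) ::ₘ
          (((n : ℝ) - r - 1) - Real.sqrt (((n : ℝ) - r - 1) ^ 2 + n)) ::ₘ
            Multiset.map (fun i => -2 * (lam i + 1)) Finset.univ.val :=
  eccMatrix_join_K1_general G r n hn hreg hdiam lam hspec
end
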